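/- Assume λ < 0 and μ > 0, fix a nonzero η ∈ ℝ² and ν ∈ ℝ. For α < ν < β, let C_{α,β} := C_A(P⁺_{α,β}, v(α)) ∪ C_A(P⁻_{α,β}, v(β)), where P⁺_{α,β} := ((−β + ρα)/(1 − ρ)) A⁻¹η and P⁻_{α,β} := ((−α + ρβ)/(1 − ρ)) A⁻¹η with ρ := e^{πλ/μ}. Then each C_{α,β} is a nonempty compact subset of ℝ², and the map (α, β) ↦ C_{α,β}, from (−∞, ν) × (ν, +∞) to the space of nonempty compact subsets of ℝ², is continuous with respect to the Hausdorff distance. -/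

import Mathlib

noncomputable section

open Real Set RealInnerProductSpace

/-- The Euclidean plane. -/
abbrev E2 : Type := EuclideanSpace ℝ (Fin 2)

/-- The vector `(a, b)` in the Euclidean plane. -/
def vec2 (a b : ℝ) : E2 := WithLp.toLp 2 ![a, b]

/-- Counterclockwise rotation of angle `φ`. -/
def rotMap (φ : ℝ) (v : E2) : E2 :=
  vec2 (Real.cos φ * v 0 - Real.sin φ * v 1) (Real.sin φ * v 0 + Real.cos φ * v 1)

/-- `θ`, the counterclockwise rotation by `π/2`. -/
def thetaMap (v : E2) : E2 := vec2 (-(v 1)) (v 0)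

/-- The linear map with matrix `A = ((l, -m), (m, l))`. -/
def Amap (l m : ℝ) (v : E2) : E2 := vec2 (l * v 0 - m * v 1) (m * v 0 + l * v 1)

/-- The inverse `A⁻¹` of the matrix `A = ((l, -m), (m, l))` (with `det A = l² + m² ≠ 0`). -/
def AinvMap (l m : ℝ) (v : E2) : E2 :=
  (1 / (l ^ 2 + m ^ 2)) • vec2 (l * v 0 + m * v 1) (-m * v 0 + l * v 1)

/-- The matrix exponential `e^{τA} = e^{τl} R_{τm}` for `A = ((l, -m), (m, l))`. -/
def expA (l m τ : ℝ) (v : E2) : E2 := Real.exp (τ * l) • rotMap (τ * m) v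

/-- The equilibrium `v(u) = -u A⁻¹ η`. -/
def equil (l m : ℝ) (η : E2) (u : ℝ) : E2 := (-u) • AinvMap l m η

/-- The solution `φ(s, v, u) = e^{sA}(v - v(u)) + v(u)` of `ẋ = Ax + uη` for constant control. -/
def phi (l m : ℝ) (η : E2) (s : ℝ) (v : E2) (u : ℝ) : E2 :=
  expA l m s (v - equil l m η u) + equil l m η u

/-- The spiral `φ_A(τ, v₁, v₂) = e^{τA}(v₁ - v₂) + v₂`. -/
def phiA (l m : ℝ) (τ : ℝ) (v₁ v₂ : E2) : E2 := expA l m τ (v₁ - v₂) + v₂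

/-- The region `C_A(v₁, v₂)`. -/
def CA (l m : ℝ) (v₁ v₂ : E2) : Set E2 :=
  {v | 0 ≤ ⟪v - v₂, thetaMap (v₁ - v₂)⟫ ∧
    ∀ τ ∈ Icc (0 : ℝ) (π / m),
      0 ≤ ⟪v - phiA l m τ v₁ v₂, thetaMap (Amap l m (expA l m τ (v₁ - v₂)))⟫}

/-- Concatenated solution associated to a finite list of (time, control) pairs. -/
def trajComp (l m : ℝ) (η : E2) : E2 → List (ℝ × ℝ) → E2
  | v, [] => v
  | v, p :: rest => trajComp l m η (phi l m η p.1 v p.2) rest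

/-- The forward reachable set `R⁺(v)`. -/
def ReachPlus (l m : ℝ) (η : E2) (Ω : Set ℝ) (v : E2) : Set E2 :=
  {w | ∃ L : List (ℝ × ℝ), (∀ p ∈ L, 0 ≤ p.1 ∧ p.2 ∈ Ω) ∧ w = trajComp l m η v L}

/-- The backward reachable set `R⁻(v)` (forward reachable set of the time-reversed system). -/
def ReachMinus (l m : ℝ) (η : E2) (Ω : Set ℝ) (v : E2) : Set E2 :=
  {w | ∃ L : List (ℝ × ℝ), (∀ p ∈ L, p.1 ≤ 0 ∧ p.2 ∈ Ω) ∧ w = trajComp l m η v L}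

/-- An admissible trajectory of the system starting at `v`. -/
def IsAdmissibleTraj (l m : ℝ) (η : E2) (Ω : Set ℝ) (v : E2) (x : ℝ → E2) : Prop :=
  x 0 = v ∧
  ∃ t : ℕ → ℝ, t 0 = 0 ∧ StrictMono t ∧ (∀ M : ℝ, ∃ n, M < t n) ∧
    ∃ u : ℕ → ℝ, (∀ k, u k ∈ Ω) ∧
      ∀ k, ∀ s ∈ Icc (t k) (t (k + 1)), x s = phi l m η (s - t k) (x (t k)) (u k)

/-- An admissible trajectory of the time-reversed system starting at `v`. -/
def IsAdmissibleTrajRev (l m : ℝ) (η : E2) (Ω : Set ℝ) (v : E2) (x : ℝ → E2) : Prop :=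
  x 0 = v ∧
  ∃ t : ℕ → ℝ, t 0 = 0 ∧ StrictMono t ∧ (∀ M : ℝ, ∃ n, M < t n) ∧
    ∃ u : ℕ → ℝ, (∀ k, u k ∈ Ω) ∧
      ∀ k, ∀ s ∈ Icc (t k) (t (k + 1)), x s = phi l m η (-(s - t k)) (x (t k)) (u k)

/-- Conditions (a) and (b) of the definition of a control set. -/
def ControlSetAxioms (l m : ℝ) (η : E2) (Ω : Set ℝ) (D : Set E2) : Prop :=
  (∀ v ∈ D, ∃ x : ℝ → E2, IsAdmissibleTraj l m η Ω v x ∧ ∀ s : ℝ, 0 ≤ s → x s ∈ D) ∧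
  ∀ v ∈ D, D ⊆ closure (ReachPlus l m η Ω v)

/-- A control set: a set satisfying (a) and (b), maximal with respect to set inclusion. -/
def IsControlSet (l m : ℝ) (η : E2) (Ω : Set ℝ) (D : Set E2) : Prop :=
  ControlSetAxioms l m η Ω D ∧
    ∀ D' : Set E2, ControlSetAxioms l m η Ω D' → D ⊆ D' → D' = D

/-- Conditions (a) and (b) of the definition of a control set of the time-reversed system. -/
def ControlSetAxiomsRev (l m : ℝ) (η : E2) (Ω : Set ℝ) (D : Set E2) : Prop :=
  (∀ v ∈ D, ∃ x : ℝ → E2, IsAdmissibleTrajRev l m η Ω v x ∧ ∀ s : ℝ, 0 ≤ s → x s ∈ D) ∧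
  ∀ v ∈ D, D ⊆ closure (ReachMinus l m η Ω v)

/-- A control set of the time-reversed system. -/
def IsControlSetRev (l m : ℝ) (η : E2) (Ω : Set ℝ) (D : Set E2) : Prop :=
  ControlSetAxiomsRev l m η Ω D ∧
    ∀ D' : Set E2, ControlSetAxiomsRev l m η Ω D' → D ⊆ D' → D' = D

/-- `ρ = e^{πλ/μ}`. -/
def rho (l m : ℝ) : ℝ := Real.exp (π * l / m)

/-- The point `P⁺ = ((-u⁺ + ρ u⁻)/(1 - ρ)) A⁻¹ η`. -/
def Pplus (l m : ℝ) (η : E2) (um up : ℝ) : E2 :=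
  ((-up + rho l m * um) / (1 - rho l m)) • AinvMap l m η

/-- The point `P⁻ = ((-u⁻ + ρ u⁺)/(1 - ρ)) A⁻¹ η`. -/
def Pminus (l m : ℝ) (η : E2) (um up : ℝ) : E2 :=
  ((-um + rho l m * up) / (1 - rho l m)) • AinvMap l m η

/-- The region `C = C_A(P⁺, v(u⁻)) ∪ C_A(P⁻, v(u⁺))`. -/
def regionC (l m : ℝ) (η : E2) (um up : ℝ) : Set E2 :=
  CA l m (Pplus l m η um up) (equil l m η um) ∪ CA l m (Pminus l m η um up) (equil l m η up)

/-- The sequence `P₀ = v(u⁺)`, `P_{2n+1} = φ(π/μ, P_{2n}, u⁻)`, `P_{2n+2} = φ(π/μ, P_{2n+1}, u⁺)`. -/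
def Pseq (l m : ℝ) (η : E2) (um up : ℝ) : ℕ → E2
  | 0 => equil l m η up
  | n + 1 => phi l m η (π / m) (Pseq l m η um up n) (if n % 2 = 0 then um else up)

/-- The periodic orbit `O`. -/
def orbitO (l m : ℝ) (η : E2) (um up : ℝ) : Set E2 :=
  (fun s => phi l m η s (Pplus l m η um up) um) '' Icc (0 : ℝ) (π / m) ∪
    (fun s => phi l m η s (Pminus l m η um up) up) '' Icc (0 : ℝ) (π / m)

/-!
Translating by `v₂` and scaling by `c > 0` carries `C_A(e, 0)` onto `C_A(v₂ + c e, v₂)`, and with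
`c = (β - α)/(1 - ρ) > 0` one has `P⁺ = v(α) - c A⁻¹η` and `P⁻ = v(β) + c A⁻¹η`. So `C_{α,β}` is
the union of the two fixed sets `C_A(∓A⁻¹η, 0)`, scaled by `c` and translated to `v(α)`, `v(β)`.
These fixed sets are intersections of closed half-planes, and they are bounded: for
`a = ⟪x, e⟫`, `b = ⟪x, θ e⟫`, the first half-plane and those at `τ = 0, π/(2μ), π/μ` (where
`e^{τA} e` is a positive multiple of `e`, `θ e`, `-e`) confine `(a, b)` to a disc, so
`‖x‖ ≤ 2‖e‖`. Hence `C_{α,β}` is compact, and changing `(α, β)` moves each of its points by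
`O(|Δα| + |Δβ|)`, which bounds the Hausdorff distance.
-/

open Metric

@[simp] lemma vec2_zero (a b : ℝ) : vec2 a b 0 = a := rfl

@[simp] lemma vec2_one (a b : ℝ) : vec2 a b 1 = b := rfl

lemma inner_E2 (x y : E2) : ⟪x, y⟫ = x 0 * y 0 + x 1 * y 1 := by
  simp [PiLp.inner_apply, Fin.sum_univ_two]
  ring

lemma norm_sq_E2 (x : E2) : ‖x‖ ^ 2 = x 0 ^ 2 + x 1 ^ 2 := by
  rw [← real_inner_self_eq_norm_sq, inner_E2]
  ring

lemma thetaMap_smul (c : ℝ) (v : E2) : thetaMap (c • v) = c • thetaMap v := by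
  ext i; fin_cases i <;> simp [thetaMap]

lemma thetaMap_thetaMap (v : E2) : thetaMap (thetaMap v) = -v := by
  ext i; fin_cases i <;> simp [thetaMap]

lemma thetaMap_Amap (l m : ℝ) (v : E2) : thetaMap (Amap l m v) = l • thetaMap v - m • v := by
  ext i; fin_cases i <;> simp [thetaMap, Amap]; ring

lemma inner_thetaMap_self (v : E2) : ⟪v, thetaMap v⟫ = 0 := by
  rw [inner_E2]; simp [thetaMap]; ring

lemma norm_thetaMap (v : E2) : ‖thetaMap v‖ = ‖v‖ := by
  rw [← sq_eq_sq₀ (norm_nonneg _) (norm_nonneg _), norm_sq_E2, norm_sq_E2]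
  simp [thetaMap]; ring

lemma inner_sq_add_inner_thetaMap_sq (x e : E2) :
    ⟪x, e⟫ ^ 2 + ⟪x, thetaMap e⟫ ^ 2 = ‖x‖ ^ 2 * ‖e‖ ^ 2 := by
  rw [inner_E2, inner_E2, norm_sq_E2, norm_sq_E2]
  simp [thetaMap]; ring

lemma Amap_smul (l m c : ℝ) (v : E2) : Amap l m (c • v) = c • Amap l m v := by
  ext i; fin_cases i <;> simp [Amap] <;> ring

lemma Amap_AinvMap {l m : ℝ} (h : l ^ 2 + m ^ 2 ≠ 0) (v : E2) : Amap l m (AinvMap l m v) = v := by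
  ext i; fin_cases i <;> simp [Amap, AinvMap] <;> field_simp <;> ring

lemma AinvMap_ne_zero {l m : ℝ} (hm : m ≠ 0) {v : E2} (hv : v ≠ 0) : AinvMap l m v ≠ 0 := by
  intro h
  apply hv
  rw [← Amap_AinvMap (l := l) (m := m) (by positivity) v, h]
  ext i; fin_cases i <;> simp [Amap]

lemma rotMap_smul (φ c : ℝ) (v : E2) : rotMap φ (c • v) = c • rotMap φ v := by
  ext i; fin_cases i <;> simp [rotMap] <;> ring

lemma expA_smul (l m τ c : ℝ) (v : E2) : expA l m τ (c • v) = c • expA l m τ v := by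
  rw [expA, expA, rotMap_smul, smul_comm]

lemma expA_zero (l m : ℝ) (v : E2) : expA l m 0 v = v := by
  ext i; fin_cases i <;> simp [expA, rotMap]

lemma expA_pi_div_two {m : ℝ} (hm : m ≠ 0) (l : ℝ) (v : E2) :
    expA l m (π / (2 * m)) v = exp (π / (2 * m) * l) • thetaMap v := by
  have : π / (2 * m) * m = π / 2 := by field_simp
  ext i; fin_cases i <;> simp [expA, rotMap, thetaMap, this]

lemma expA_pi {m : ℝ} (hm : m ≠ 0) (l : ℝ) (v : E2) :
    expA l m (π / m) v = (-exp (π / m * l)) • v := by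
  have : π / m * m = π := by field_simp
  ext i; fin_cases i <;> simp [expA, rotMap, this]

lemma inner_neg_thetaMap_Amap_self (l m : ℝ) (z : E2) :
    ⟪-z, thetaMap (Amap l m z)⟫ = m * ‖z‖ ^ 2 := by
  rw [thetaMap_Amap, inner_neg_left, inner_sub_right, inner_smul_right, inner_smul_right,
    inner_thetaMap_self, real_inner_self_eq_norm_sq]
  ring

lemma vertex_mem_CA {l m : ℝ} (hm : 0 ≤ m) (v₁ v₂ : E2) : v₂ ∈ CA l m v₁ v₂ := by
  refine ⟨by simp, fun τ _ => ?_⟩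
  rw [phiA, sub_add_cancel_right, inner_neg_thetaMap_Amap_self]
  positivity

lemma isClosed_CA (l m : ℝ) (v₁ v₂ : E2) : IsClosed (CA l m v₁ v₂) := by
  have hcont : ∀ p w : E2, Continuous fun v : E2 => ⟪v - p, w⟫ := fun p w =>
    (continuous_id.sub continuous_const).inner continuous_const
  rw [CA, ofPred_and]
  simp only [ofPred_forall]
  exact (isClosed_le continuous_const (hcont _ _)).inter <|
    isClosed_iInter fun τ => isClosed_iInter fun _ => isClosed_le continuous_const (hcont _ _)

lemma mem_CA_add_smul_iff {l m c : ℝ} (hc : 0 < c) (v₂ e x : E2) :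
    v₂ + c • x ∈ CA l m (v₂ + c • e) v₂ ↔ x ∈ CA l m e 0 := by
  have hscale : ∀ u w : E2, 0 ≤ ⟪c • u, c • w⟫ ↔ 0 ≤ ⟪u, w⟫ := fun u w => by
    rw [real_inner_smul_left, real_inner_smul_right, ← mul_assoc]
    exact mul_nonneg_iff_of_pos_left (by positivity)
  have hphi : ∀ τ, v₂ + c • x - phiA l m τ (v₂ + c • e) v₂ = c • (x - phiA l m τ e 0) := by
    intro τ
    simp only [phiA, add_sub_cancel_left, sub_zero, add_zero, expA_smul, smul_sub]
    abel
  simp only [CA, mem_ofPred_eq, hphi, add_sub_cancel_left, sub_zero, thetaMap_smul, Amap_smul,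
    expA_smul, hscale]

lemma CA_add_smul {l m c : ℝ} (hc : 0 < c) (v₂ e : E2) :
    CA l m (v₂ + c • e) v₂ = (fun x => v₂ + c • x) '' CA l m e 0 := by
  ext v
  refine ⟨fun hv => ⟨c⁻¹ • (v - v₂), ?_, ?_⟩, ?_⟩
  · rwa [← mem_CA_add_smul_iff hc v₂, smul_inv_smul₀ hc.ne', add_sub_cancel]
  · simp [smul_inv_smul₀ hc.ne']
  · rintro ⟨x, hx, rfl⟩
    exact (mem_CA_add_smul_iff hc v₂ e x).mpr hx

/-- With `p = m a - l b` and `q = l a + m b`: `|p| ≤ m r`, `l r ≤ q ≤ m r`, and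
`p² + q² = (l² + m²)(a² + b²)`. -/
lemma sq_add_sq_le_two_mul_sq {l m a b r : ℝ} (hl : l < 0) (hm : 0 < m) (hb : 0 ≤ b)
    (hp : m * a - l * b ≤ m * r) (hp' : l * b - m * a ≤ m * r) (hq : l * a + m * b ≤ m * r) :
    a ^ 2 + b ^ 2 ≤ 2 * r ^ 2 := by
  have hq' : l * r ≤ l * a + m * b := by
    have hlp : l * (m * r) ≤ l * (m * a - l * b) := mul_le_mul_of_nonpos_left hp hl.le
    have hmq : m * (l * a + m * b) = l * (m * a - l * b) + (l ^ 2 + m ^ 2) * b := by ring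
    refine le_of_mul_le_mul_left ?_ hm
    nlinarith [mul_nonneg (add_nonneg (sq_nonneg l) (sq_nonneg m)) hb]
  have hp2 : (m * a - l * b) ^ 2 ≤ (l ^ 2 + m ^ 2) * r ^ 2 := by nlinarith
  have hq2 : (l * a + m * b) ^ 2 ≤ (l ^ 2 + m ^ 2) * r ^ 2 := by
    rcases le_total 0 (l * a + m * b) with h | h <;> nlinarith
  have hsum : (m * a - l * b) ^ 2 + (l * a + m * b) ^ 2 = (l ^ 2 + m ^ 2) * (a ^ 2 + b ^ 2) := by
    ring
  have hd : 0 < l ^ 2 + m ^ 2 := by positivity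
  nlinarith

lemma inner_bounds_of_mem_CA_zero {l m : ℝ} (hl : l < 0) (hm : 0 < m) {e x : E2}
    (hx : x ∈ CA l m e 0) :
    0 ≤ ⟪x, thetaMap e⟫ ∧ m * ⟪x, e⟫ - l * ⟪x, thetaMap e⟫ ≤ m * ‖e‖ ^ 2 ∧
      l * ⟪x, thetaMap e⟫ - m * ⟪x, e⟫ ≤ m * ‖e‖ ^ 2 ∧
      l * ⟪x, e⟫ + m * ⟪x, thetaMap e⟫ ≤ m * ‖e‖ ^ 2 := by
  obtain ⟨hθ, hτ⟩ := hx
  have key : ∀ τ ∈ Icc (0 : ℝ) (π / m),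
      0 ≤ ⟪x, thetaMap (Amap l m (expA l m τ e))⟫ + m * ‖expA l m τ e‖ ^ 2 := by
    intro τ h
    have := hτ τ h
    rwa [phiA, sub_zero, add_zero, sub_eq_add_neg, inner_add_left,
      inner_neg_thetaMap_Amap_self] at this
  have hpi := pi_pos
  have h₀ := key 0 ⟨le_rfl, by positivity⟩
  have h₁ := key (π / (2 * m)) ⟨by positivity, div_le_div_of_nonneg_left hpi.le hm (by linarith)⟩
  have h₂ := key (π / m) ⟨by positivity, le_rfl⟩
  rw [expA_zero] at h₀
  rw [expA_pi_div_two hm.ne'] at h₁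
  rw [expA_pi hm.ne'] at h₂
  simp only [Amap_smul, thetaMap_smul, thetaMap_Amap, thetaMap_thetaMap, norm_smul, norm_neg,
    norm_thetaMap, inner_smul_right, inner_sub_right, inner_neg_right,
    Real.norm_of_nonneg (exp_pos _).le] at h₀ h₁ h₂
  have hr : 0 ≤ m * ‖e‖ ^ 2 := by positivity
  have hshrink : ∀ s t : ℝ, 0 < s → s < 1 → 0 ≤ s * (m * s * ‖e‖ ^ 2 - t) → t ≤ m * ‖e‖ ^ 2 := by
    intro s t hs hs1 h
    have := (mul_nonneg_iff_of_pos_left hs).mp h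
    nlinarith
  have hexp : ∀ τ > 0, exp (τ * l) < 1 := fun τ hτ =>
    exp_lt_one_iff.mpr (mul_neg_of_pos_of_neg hτ hl)
  refine ⟨by simpa using hθ, by linarith,
    hshrink _ _ (exp_pos _) (hexp (π / m) (by positivity)) (by linarith),
    hshrink _ _ (exp_pos _) (hexp (π / (2 * m)) (by positivity)) (by linarith)⟩

lemma CA_zero_subset_closedBall {l m : ℝ} (hl : l < 0) (hm : 0 < m) {e : E2} (he : e ≠ 0) :
    CA l m e 0 ⊆ closedBall 0 (2 * ‖e‖) := by
  intro x hx
  obtain ⟨hb, hp, hp', hq⟩ := inner_bounds_of_mem_CA_zero hl hm hx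
  have h := sq_add_sq_le_two_mul_sq hl hm hb hp hp' hq
  rw [inner_sq_add_inner_thetaMap_sq] at h
  have he2 : 0 < ‖e‖ ^ 2 := pow_pos (norm_pos_iff.mpr he) 2
  have hx2 : ‖x‖ ^ 2 ≤ 2 * ‖e‖ ^ 2 := le_of_mul_le_mul_right (by nlinarith) he2
  rw [mem_closedBall_zero_iff]
  nlinarith [norm_nonneg x, norm_nonneg e]

lemma isCompact_CA_zero {l m : ℝ} (hl : l < 0) (hm : 0 < m) {e : E2} (he : e ≠ 0) :
    IsCompact (CA l m e 0) :=
  isCompact_of_isClosed_isBounded (isClosed_CA l m e 0)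
    (isBounded_closedBall.subset (CA_zero_subset_closedBall hl hm he))

lemma dist_add_smul_add_smul_le {E : Type*} [SeminormedAddCommGroup E] [NormedSpace ℝ E]
    (a a' x : E) (c c' : ℝ) : dist (a + c • x) (a' + c' • x) ≤ ‖a - a'‖ + |c - c'| * ‖x‖ := by
  rw [dist_eq_norm, show a + c • x - (a' + c' • x) = (a - a') + (c - c') • x by
    rw [sub_smul]; abel]
  exact (norm_add_le _ _).trans_eq (by rw [norm_smul, Real.norm_eq_abs])

lemma hausdorffEDist_image_le {α β : Type*} [PseudoEMetricSpace α] {f g : β → α} {K : Set β}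
    {r : ENNReal} (h : ∀ x ∈ K, edist (f x) (g x) ≤ r) : hausdorffEDist (f '' K) (g '' K) ≤ r :=
  hausdorffEDist_le_of_mem_edist
    (by rintro _ ⟨x, hx, rfl⟩; exact ⟨g x, mem_image_of_mem g hx, h x hx⟩)
    (by rintro _ ⟨x, hx, rfl⟩; exact ⟨f x, mem_image_of_mem f hx, edist_comm (g x) (f x) ▸ h x hx⟩)

lemma rho_lt_one {l m : ℝ} (hl : l < 0) (hm : 0 < m) : rho l m < 1 :=
  exp_lt_one_iff.mpr (div_neg_of_neg_of_pos (mul_neg_of_pos_of_neg pi_pos hl) hm)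

lemma equil_sub_equil (l m : ℝ) (η : E2) (u u' : ℝ) :
    equil l m η u' - equil l m η u = (u - u') • AinvMap l m η := by
  rw [equil, equil, ← sub_smul, neg_sub_neg]

lemma Pplus_eq {l m : ℝ} (hρ : rho l m ≠ 1) (η : E2) (α β : ℝ) :
    Pplus l m η α β = equil l m η α + ((β - α) / (1 - rho l m)) • -AinvMap l m η := by
  have : 1 - rho l m ≠ 0 := sub_ne_zero.mpr hρ.symm
  rw [Pplus, equil, smul_neg, ← neg_smul, ← add_smul]
  congr 1
  field_simp
  ring

lemma Pminus_eq {l m : ℝ} (hρ : rho l m ≠ 1) (η : E2) (α β : ℝ) :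
    Pminus l m η α β = equil l m η β + ((β - α) / (1 - rho l m)) • AinvMap l m η := by
  have : 1 - rho l m ≠ 0 := sub_ne_zero.mpr hρ.symm
  rw [Pminus, equil, ← add_smul]
  congr 1
  field_simp
  ring

lemma regionC_eq_union_image {l m : ℝ} (hl : l < 0) (hm : 0 < m) (η : E2) {α β : ℝ}
    (hαβ : α < β) :
    regionC l m η α β =
      (fun x => equil l m η α + ((β - α) / (1 - rho l m)) • x) '' CA l m (-AinvMap l m η) 0 ∪
      (fun x => equil l m η β + ((β - α) / (1 - rho l m)) • x) '' CA l m (AinvMap l m η) 0 := by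
  have hρ := rho_lt_one hl hm
  have hc : 0 < (β - α) / (1 - rho l m) := div_pos (by linarith) (by linarith)
  rw [regionC, Pplus_eq hρ.ne, Pminus_eq hρ.ne, CA_add_smul hc, CA_add_smul hc]

lemma hausdorffDist_regionC_le {l m : ℝ} (hl : l < 0) (hm : 0 < m) {η : E2} (hη : η ≠ 0)
    {α β α' β' : ℝ} (hαβ : α < β) (hαβ' : α' < β') :
    hausdorffDist (regionC l m η α' β') (regionC l m η α β) ≤
      ‖AinvMap l m η‖ * (1 + 2 / (1 - rho l m)) * (|α' - α| + |β' - β|) := by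
  have hρ : 0 < 1 - rho l m := sub_pos.mpr (rho_lt_one hl hm)
  set N := ‖AinvMap l m η‖
  set D := |α' - α| + |β' - β|
  have hscale : |(β' - α') / (1 - rho l m) - (β - α) / (1 - rho l m)| ≤ D / (1 - rho l m) := by
    rw [div_sub_div_same, abs_div, abs_of_pos hρ]
    gcongr
    calc |β' - α' - (β - α)| = |(β' - β) - (α' - α)| := by ring_nf
      _ ≤ D := (abs_sub _ _).trans_eq (add_comm _ _)
  have hpoint : ∀ {u u' : ℝ} {e : E2}, |u' - u| ≤ D → ‖e‖ = N → ∀ x ∈ CA l m e 0,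
      dist (equil l m η u' + ((β' - α') / (1 - rho l m)) • x)
        (equil l m η u + ((β - α) / (1 - rho l m)) • x) ≤ N * (1 + 2 / (1 - rho l m)) * D := by
    intro u u' e hu he x hx
    have he0 : e ≠ 0 := norm_pos_iff.mp (he ▸ norm_pos_iff.mpr (AinvMap_ne_zero hm.ne' hη))
    have hx : ‖x‖ ≤ 2 * N := by
      simpa [he] using CA_zero_subset_closedBall hl hm he0 hx
    refine (dist_add_smul_add_smul_le _ _ _ _ _).trans ?_
    rw [equil_sub_equil, norm_smul, Real.norm_eq_abs, abs_sub_comm]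
    calc |u' - u| * N + |(β' - α') / (1 - rho l m) - (β - α) / (1 - rho l m)| * ‖x‖
        ≤ D * N + D / (1 - rho l m) * (2 * N) := by gcongr
      _ = N * (1 + 2 / (1 - rho l m)) * D := by ring
  have hD : |α' - α| ≤ D ∧ |β' - β| ≤ D := ⟨le_add_of_nonneg_right (abs_nonneg _),
    le_add_of_nonneg_left (abs_nonneg _)⟩
  rw [regionC_eq_union_image hl hm η hαβ, regionC_eq_union_image hl hm η hαβ']
  refine ENNReal.toReal_le_of_le_ofReal (by positivity)
    (hausdorffEDist_union_le.trans (max_le ?_ ?_)) <;>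
  refine hausdorffEDist_image_le fun x hx => (edist_le_ofReal (by positivity)).mpr ?_
  · exact hpoint hD.1 (norm_neg _) x hx
  · exact hpoint hD.2 rfl x hx

/-- each `C_{α,β}` is a nonempty compact set and `(α, β) ↦ C_{α,β}` is continuous
with respect to the Hausdorff distance on `(-∞, ν) × (ν, +∞)`. -/
theorem stmt17 (l m : ℝ) (hl : l < 0) (hm : 0 < m) (η : E2) (hη : η ≠ 0) (ν : ℝ) :
    (∀ α β : ℝ, α < ν → ν < β →
      (regionC l m η α β).Nonempty ∧ IsCompact (regionC l m η α β)) ∧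
    ∀ α β : ℝ, α < ν → ν < β → ∀ ε : ℝ, 0 < ε → ∃ δ : ℝ, 0 < δ ∧
      ∀ α' β' : ℝ, α' < ν → ν < β' → |α' - α| < δ → |β' - β| < δ →
        Metric.hausdorffDist (regionC l m η α' β') (regionC l m η α β) < ε := by
  have hA : AinvMap l m η ≠ 0 := AinvMap_ne_zero hm.ne' hη
  refine ⟨fun α β hα hβ => ⟨⟨_, Or.inl (vertex_mem_CA hm.le _ _)⟩, ?_⟩,
    fun α β hα hβ ε hε => ?_⟩
  · rw [regionC_eq_union_image hl hm η (hα.trans hβ)]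
    exact ((isCompact_CA_zero hl hm (neg_ne_zero.mpr hA)).image (by fun_prop)).union
      ((isCompact_CA_zero hl hm hA).image (by fun_prop))
  · have hρ : 0 < 1 - rho l m := sub_pos.mpr (rho_lt_one hl hm)
    set L := ‖AinvMap l m η‖ * (1 + 2 / (1 - rho l m))
    have hL : 0 ≤ L := by positivity
    refine ⟨ε / (2 * L + 1), by positivity, fun α' β' hα' hβ' hdα hdβ => ?_⟩
    calc hausdorffDist (regionC l m η α' β') (regionC l m η α β)
        ≤ L * (|α' - α| + |β' - β|) :=
          hausdorffDist_regionC_le hl hm hη (hα.trans hβ) (hα'.trans hβ')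
      _ ≤ L * (ε / (2 * L + 1) + ε / (2 * L + 1)) := by gcongr
      _ = ε * (2 * L / (2 * L + 1)) := by ring
      _ < ε := mul_lt_of_lt_one_right hε ((div_lt_one (by positivity)).mpr (by linarith))
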